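/- For every symplectic partition λ of 2n, the set of special symplectic partitions λ' of 2n with λ ≤ λ' in the dominance order is nonempty and possesses a least element (denoted sp(λ)). -/

import Mathlib

open Classical

namespace Wald

/-- `S f k = λ_1 + … + λ_k` (partitions are indexed from 1; index 0 is unused). -/
def S (f : ℕ → ℕ) (k : ℕ) : ℕ := ∑ j ∈ Finset.Icc 1 k, f j

/-- `f` represents a partition of `N`: nonincreasing on indices `≥ 1`,
finitely many nonzero terms, with total sum `N`. -/
structure IsPartition (f : ℕ → ℕ) (N : ℕ) : Prop where
  mono : ∀ ⦃j k : ℕ⦄, 1 ≤ j → j ≤ k → f k ≤ f j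
  fin : ∃ m, ∀ j, m < j → f j = 0
  total : ∀ m, (∀ j, m < j → f j = 0) → S f m = N

/-- multiplicity of `i` as a term of the partition -/
noncomputable def mult (f : ℕ → ℕ) (i : ℕ) : ℕ := Set.ncard {j : ℕ | 1 ≤ j ∧ f j = i}

/-- dominance order: `Dom f g ↔ f ≤ g` -/
def Dom (f g : ℕ → ℕ) : Prop := ∀ k, S f k ≤ S g k

/-- transposed partition: `(transpose f) j = #{i ≥ 1 : f i ≥ j}` for `j ≥ 1` -/
noncomputable def transpose (f : ℕ → ℕ) : ℕ → ℕ :=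
  fun j => Set.ncard {i : ℕ | 1 ≤ i ∧ 1 ≤ j ∧ j ≤ f i}

/-- union of two partitions (all terms listed together in nonincreasing order);
it is characterized by `transpose (unionP f g) = transpose f + transpose g`. -/
noncomputable def unionP (f g : ℕ → ℕ) : ℕ → ℕ :=
  transpose (fun j => transpose f j + transpose g j)

/-- the partition `(1)` -/
def one1 : ℕ → ℕ := fun j => if j = 1 then 1 else 0

/-- symplectic partition: every odd `i ≥ 1` has even multiplicity -/
def Symp (f : ℕ → ℕ) : Prop := ∀ i, Odd i → Even (mult f i)

/-- orthogonal partition: every even `i ≥ 2` has even multiplicity -/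
def Orth (f : ℕ → ℕ) : Prop := ∀ i, Even i → 1 ≤ i → Even (mult f i)

/-- `λ_{2j-1} ≡ λ_{2j} (mod 2)` for all `j ≥ 1` (speciality for symplectic
partitions of `2n` and orthogonal partitions of `2n`). -/
def SpecialPairs (f : ℕ → ℕ) : Prop := ∀ j, 1 ≤ j → f (2*j - 1) % 2 = f (2*j) % 2

/-- speciality for orthogonal partitions of `2n+1`: `λ_1` odd and
`λ_{2j} ≡ λ_{2j+1} (mod 2)` for all `j ≥ 1`. -/
def SpecialOrthOdd (f : ℕ → ℕ) : Prop :=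
  Odd (f 1) ∧ ∀ j, 1 ≤ j → f (2*j) % 2 = f (2*j + 1) % 2

/-- `Jord_bp` for symplectic partitions: even `i ≥ 2` with positive multiplicity -/
def JordbpS (f : ℕ → ℕ) : Set ℕ := {i | Even i ∧ 2 ≤ i ∧ 1 ≤ mult f i}

/-- `Jord_bp` for orthogonal partitions: odd `i ≥ 1` with positive multiplicity -/
def JordbpO (f : ℕ → ℕ) : Set ℕ := {i | Odd i ∧ 1 ≤ mult f i}

/-- the set `{i_1 > … > i_m}` of terms with odd multiplicity -/
def OddSet (f : ℕ → ℕ) : Set ℕ := {i | Odd (mult f i)}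

/-- for special symplectic partitions: `{i_1 > … > i_{m'}}`, with `0` added if `m` is odd -/
def Dsymp (f : ℕ → ℕ) : Set ℕ :=
  {i | Odd (mult f i) ∨ (i = 0 ∧ Odd (OddSet f).ncard)}

/-- `a = i_{2h-1}` and `b = i_{2h}` for some `h`: consecutive elements of `Dsymp f`
with an even number of elements of `Dsymp f` above `a`. -/
def PairedS (f : ℕ → ℕ) (a b : ℕ) : Prop :=
  b < a ∧ a ∈ Dsymp f ∧ b ∈ Dsymp f ∧ Even ((Dsymp f ∩ Set.Ioi a).ncard) ∧
    Dsymp f ∩ Set.Ioo b a = ∅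

/-- intervals of a special symplectic partition of `2n` -/
def IsIntervalS (f : ℕ → ℕ) (Δ : Set ℕ) : Prop :=
  (∃ a b, PairedS f a b ∧ Δ = {i | (i = 0 ∨ 1 ≤ mult f i) ∧ b ≤ i ∧ i ≤ a}) ∨
  (∃ i, Even i ∧ (i = 0 ∨ (2 ≤ i ∧ 1 ≤ mult f i)) ∧
    (¬ ∃ a b, PairedS f a b ∧ b ≤ i ∧ i ≤ a) ∧ Δ = {i})

/-- `a = i_{2h-1}` and `b = i_{2h}` for some `h` (orthogonal partitions of `2n`) -/
def PairedOE (f : ℕ → ℕ) (a b : ℕ) : Prop :=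
  b < a ∧ a ∈ OddSet f ∧ b ∈ OddSet f ∧ Even ((OddSet f ∩ Set.Ioi a).ncard) ∧
    OddSet f ∩ Set.Ioo b a = ∅

/-- intervals of a special orthogonal partition of `2n` -/
def IsIntervalOE (f : ℕ → ℕ) (Δ : Set ℕ) : Prop :=
  (∃ a b, PairedOE f a b ∧ Δ = {i | 1 ≤ mult f i ∧ b ≤ i ∧ i ≤ a}) ∨
  (∃ i, Odd i ∧ 1 ≤ mult f i ∧ (¬ ∃ a b, PairedOE f a b ∧ b ≤ i ∧ i ≤ a) ∧ Δ = {i})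

/-- `a = i_{2h}` and `b = i_{2h+1}` for some `h ≥ 1` (orthogonal partitions of `2n+1`) -/
def PairedOO (f : ℕ → ℕ) (a b : ℕ) : Prop :=
  b < a ∧ a ∈ OddSet f ∧ b ∈ OddSet f ∧ Odd ((OddSet f ∩ Set.Ioi a).ncard) ∧
    OddSet f ∩ Set.Ioo b a = ∅

/-- intervals of a special orthogonal partition of `2n+1` (convention `i_0 = ∞`) -/
def IsIntervalOO (f : ℕ → ℕ) (Δ : Set ℕ) : Prop :=
  (∃ b, b ∈ OddSet f ∧ OddSet f ∩ Set.Ioi b = ∅ ∧ Δ = {i | 1 ≤ mult f i ∧ b ≤ i}) ∨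
  (∃ a b, PairedOO f a b ∧ Δ = {i | 1 ≤ mult f i ∧ b ≤ i ∧ i ≤ a}) ∨
  (∃ i, Odd i ∧ 1 ≤ mult f i ∧
    (¬ ((∃ b, b ∈ OddSet f ∧ OddSet f ∩ Set.Ioi b = ∅ ∧ b ≤ i) ∨
        (∃ a b, PairedOO f a b ∧ b ≤ i ∧ i ≤ a))) ∧ Δ = {i})

/-- `J(Δ) = {j ≥ 1 : λ_j ∈ Δ}` -/
def Jset (f : ℕ → ℕ) (Δ : Set ℕ) : Set ℕ := {j | 1 ≤ j ∧ f j ∈ Δ}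

/-- `ζ(λ)` for a special symplectic partition (`j_max(Δ_min) = ∞`, so the smallest
interval contributes no `-1`: its `J`-set has no greatest element). -/
noncomputable def zetaS (f : ℕ → ℕ) : ℕ → ℤ := fun j =>
  if ∃ Δ, IsIntervalS f Δ ∧ IsLeast (Jset f Δ) j then 1
  else if ∃ Δ, IsIntervalS f Δ ∧ IsGreatest (Jset f Δ) j then -1
  else 0

/-- `ζ(λ)` for a special orthogonal partition of `2n` -/
noncomputable def zetaOE (f : ℕ → ℕ) : ℕ → ℤ := fun j =>
  if ∃ Δ, IsIntervalOE f Δ ∧ IsLeast (Jset f Δ) j then 1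
  else if ∃ Δ, IsIntervalOE f Δ ∧ IsGreatest (Jset f Δ) j then -1
  else 0

/-- `J^+` for `λ1` special symplectic and `λ2` special orthogonal (of `2n2`) -/
def JplusSet (f1 f2 : ℕ → ℕ) : Set ℕ :=
  {j | 1 ≤ j ∧ Even (f1 j) ∧ Odd (f2 j) ∧
    ((∃ Δ, IsIntervalS f1 Δ ∧ IsLeast (Jset f1 Δ) j) ∨
     (∃ Δ, IsIntervalOE f2 Δ ∧ IsLeast (Jset f2 Δ) j))}

/-- `J^-` -/
def JminusSet (f1 f2 : ℕ → ℕ) : Set ℕ :=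
  {j | 1 ≤ j ∧ Even (f1 j) ∧ Odd (f2 j) ∧
    ((∃ Δ, IsIntervalS f1 Δ ∧ IsGreatest (Jset f1 Δ) j) ∨
     (∃ Δ, IsIntervalOE f2 Δ ∧ IsGreatest (Jset f2 Δ) j))}

/-- the sequence `ξ` -/
noncomputable def xi (f1 f2 : ℕ → ℕ) : ℕ → ℤ := fun j =>
  if j ∈ JplusSet f1 f2 then 1 else if j ∈ JminusSet f1 f2 then -1 else 0

/-- partial sums of an integer-valued sequence indexed from 1 -/
def Sz (f : ℕ → ℤ) (k : ℕ) : ℤ := ∑ j ∈ Finset.Icc 1 k, f j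

/-- `g` is the greatest orthogonal partition of `N` which is dominated by the
sequence `t` (used to define the Spaltenstein-type duality `d`). -/
def IsDualOf (g : ℕ → ℕ) (N : ℕ) (t : ℕ → ℕ) : Prop :=
  (IsPartition g N ∧ Orth g ∧ Dom g t) ∧
  ∀ ν, IsPartition ν N → Orth ν → Dom ν t → Dom ν g

/-- `g = d(f)` for `f` a symplectic partition of `2m`: the greatest orthogonal
partition of `2m+1` dominated by `^t(f ∪ (1))`. -/
def IsSympDual (g : ℕ → ℕ) (m : ℕ) (f : ℕ → ℕ) : Prop :=
  IsDualOf g (2*m+1) (transpose (unionP f one1))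

/-- `g = d(f)` for `f` an orthogonal partition of `2m`: the greatest orthogonal
partition of `2m` dominated by `^tf`. -/
def IsOrthDual (g : ℕ → ℕ) (m : ℕ) (f : ℕ → ℕ) : Prop :=
  IsDualOf g (2*m) (transpose f)

/-!
A partition is determined by its partial sums `S k`, which are concave in `k`, and it satisfies
`SpecialPairs` exactly when all `S (2j)` are even. So the partial sums of a special partition
dominating `λ` are at least `S λ (2j)` rounded up to an even number at even places, and at least
`S λ (2j+1)` and the midpoint of the two neighbouring values at odd places. These lower bounds are
themselves concave, hence are the partial sums of a special partition `sp λ`, which is then the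
least one. It is symplectic because in a symplectic `λ` an odd partial sum `S λ k` can only occur
inside a run of equal odd parts `λ_k = λ_{k+1}`, and such a place yields two equal parts of
`sp λ`.
-/

lemma S_succ (f : ℕ → ℕ) (k : ℕ) : S f (k + 1) = S f k + f (k + 1) :=
  Finset.sum_Icc_succ_top (by omega) f

lemma S_add_sum_Ioc (f : ℕ → ℕ) {a b : ℕ} (hab : a ≤ b) :
    S f b = S f a + ∑ i ∈ Finset.Ioc a b, f i := by
  have hIcc : ∀ k, Finset.Icc 1 k = Finset.Ioc 0 k := fun k => by ext; simp; omega
  simp only [S, hIcc]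
  exact (Finset.sum_Ioc_consecutive f (Nat.zero_le a) hab).symm

lemma S_eq_of_forall_lt_eq_zero {f : ℕ → ℕ} {m M : ℕ} (h : ∀ j, m < j → f j = 0)
    (hmM : m ≤ M) : S f M = S f m := by
  rw [S_add_sum_Ioc f hmM, Finset.sum_eq_zero fun i hi => h i (Finset.mem_Ioc.1 hi).1,
    add_zero]

lemma S_sub_pred {P : ℕ → ℕ} (hP : Monotone P) (h0 : P 0 = 0) (k : ℕ) :
    S (fun k => P k - P (k - 1)) k = P k := by
  induction k with
  | zero => exact h0.symm
  | succ k ih =>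
    rw [S_succ, ih, Nat.add_sub_cancel]
    have := hP (Nat.le_add_right k 1)
    omega

lemma S_mono (f : ℕ → ℕ) : Monotone (S f) :=
  monotone_nat_of_le_succ fun k => by rw [S_succ]; omega

namespace IsPartition

variable {f : ℕ → ℕ} {N : ℕ}

lemma S_eventually (hf : IsPartition f N) : ∃ m, ∀ k, m ≤ k → S f k = N := by
  obtain ⟨m, hm⟩ := hf.fin
  exact ⟨m, fun k hk => (S_eq_of_forall_lt_eq_zero hm hk).trans (hf.total m hm)⟩

lemma S_add_S_le (hf : IsPartition f N) (k : ℕ) : S f k + S f (k + 2) ≤ 2 * S f (k + 1) := by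
  have e1 := S_succ f k
  have e2 : S f (k + 2) = S f (k + 1) + f (k + 2) := S_succ f (k + 1)
  have := hf.mono (j := k + 1) (k := k + 2) (by omega) (by omega)
  omega

lemma exists_le_iff_le (hf : IsPartition f N) {v : ℕ} (hv : 1 ≤ v) :
    ∃ b, ∀ j, 1 ≤ j → (v ≤ f j ↔ j ≤ b) := by
  obtain ⟨m, hm⟩ := hf.fin
  have hex : ∃ b, f (b + 1) < v := ⟨m, by rw [hm (m + 1) (by omega)]; omega⟩
  refine ⟨Nat.find hex, fun j hj => ⟨fun hvj => ?_, fun hjb => ?_⟩⟩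
  · by_contra! hlt
    have := hf.mono (by omega) (show Nat.find hex + 1 ≤ j by omega)
    have := Nat.find_spec hex
    omega
  · have := Nat.find_min hex (show j - 1 < Nat.find hex by omega)
    rw [Nat.sub_add_cancel hj] at this
    omega

end IsPartition

lemma specialPairs_iff_forall_even_S {g : ℕ → ℕ} :
    SpecialPairs g ↔ ∀ j, Even (S g (2 * j)) := by
  have window : ∀ i, S g (2 * i + 2) = S g (2 * i) + g (2 * i + 1) + g (2 * i + 2) :=
    fun i => by rw [S_succ, S_succ]
  simp only [Nat.even_iff]
  constructor
  · intro hs j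
    induction j with
    | zero => rfl
    | succ j ih =>
      have := hs (j + 1) (by omega)
      rw [show 2 * (j + 1) - 1 = 2 * j + 1 by omega] at this
      rw [show 2 * (j + 1) = 2 * j + 2 by ring, window] at *
      omega
  · intro he j hj
    obtain ⟨i, rfl⟩ : ∃ i, j = i + 1 := ⟨j - 1, by omega⟩
    have h0 := he i
    have h1 := he (i + 1)
    rw [show 2 * (i + 1) = 2 * i + 2 by ring, window] at h1
    rw [show 2 * (i + 1) - 1 = 2 * i + 1 by omega, show 2 * (i + 1) = 2 * i + 2 by ring]
    omega

/-- Blocks of equal odd parts have even length, so a block straddling position `k` is the only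
way for `λ_1 + … + λ_k` to be odd. -/
lemma Symp.even_S_or_eq_succ {f : ℕ → ℕ} {N : ℕ} (hf : IsPartition f N) (hs : Symp f) (k : ℕ) :
    Even (S f k) ∨ (f k = f (k + 1) ∧ Odd (f k)) := by
  by_contra! h
  refine h.1 ?_
  have hfib := Finset.sum_comp (s := Finset.Icc 1 k) id f
  simp only [id] at hfib
  rw [S, hfib]
  refine Finset.even_sum _ fun v hv => ?_
  obtain ⟨i, hi, rfl⟩ := Finset.mem_image.1 hv
  rw [Finset.mem_Icc] at hi
  rcases Nat.even_or_odd (f i) with hev | hodd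
  · exact hev.mul_left _
  refine Even.mul_right ?_ _
  have hblock : {j | 1 ≤ j ∧ f j = f i} = ↑({j ∈ Finset.Icc 1 k | f j = f i}) := by
    ext j
    simp only [Set.mem_ofPred_eq, Finset.coe_filter, Finset.mem_Icc]
    refine ⟨fun ⟨hj, hji⟩ => ⟨⟨hj, ?_⟩, hji⟩, fun ⟨⟨hj, _⟩, hji⟩ => ⟨hj, hji⟩⟩
    by_contra! hkj
    have h1 := hf.mono hi.1 hi.2
    have h2 := hf.mono (j := k) (k := k + 1) (by omega) (by omega)
    have h3 := hf.mono (j := k + 1) (by omega) hkj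
    exact h.2 (by omega) (by rwa [show f k = f i by omega])
  have := hs _ hodd
  rwa [mult, hblock, Set.ncard_coe_finset] at this

lemma symp_of_forall_even_S_or_eq_succ {g : ℕ → ℕ} {N : ℕ} (hg : IsPartition g N)
    (h : ∀ k, Even (S g k) ∨ g k = g (k + 1)) : Symp g := by
  intro v hv
  have hbreak : ∀ c w, 1 ≤ w → (∀ j, 1 ≤ j → (w ≤ g j ↔ j ≤ c)) → Even (S g c) := by
    intro c w hw hc
    rcases Nat.eq_zero_or_pos c with rfl | hc0
    · exact Even.zero
    · refine (h c).resolve_right fun heq => ?_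
      have := (hc c hc0).2 le_rfl
      have := (hc (c + 1) (by omega)).1.mt (by omega)
      omega
  obtain ⟨a, ha⟩ := hg.exists_le_iff_le (v := v + 1) (by omega)
  obtain ⟨b, hb⟩ := hg.exists_le_iff_le hv.pos
  have hab : a ≤ b := by
    by_contra! hba
    have := (ha a (by omega)).2 le_rfl
    have := (hb a (by omega)).1 (by omega)
    omega
  have hblock : {j | 1 ≤ j ∧ g j = v} = ↑(Finset.Ioc a b) := by
    ext j
    simp only [Set.mem_ofPred_eq, Finset.coe_Ioc, Set.mem_Ioc]
    constructor
    · rintro ⟨hj, rfl⟩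
      exact ⟨by have := (ha j hj).2.mt; omega, (hb j hj).1 le_rfl⟩
    · rintro ⟨haj, hjb⟩
      have := (ha j (by omega)).1.mt (by omega)
      have := (hb j (by omega)).2 hjb
      exact ⟨by omega, by omega⟩
  have hsum : S g b = S g a + (b - a) * v := by
    rw [S_add_sum_Ioc g hab, Finset.sum_congr rfl fun j hj => ?_, Finset.sum_const,
      Nat.card_Ioc, smul_eq_mul]
    exact (hblock.symm ▸ Finset.mem_coe.2 hj : j ∈ {j | 1 ≤ j ∧ g j = v}).2
  have hprod : Even ((b - a) * v) := by
    have := hbreak b v hv.pos hb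
    rw [hsum, Nat.even_add] at this
    exact this.1 (hbreak a (v + 1) (by omega) ha)
  rw [mult, hblock, Set.ncard_coe_finset, Nat.card_Ioc]
  exact (Nat.even_mul.1 hprod).resolve_right (Nat.not_even_iff_odd.2 hv)

lemma isPartition_sub_pred {P : ℕ → ℕ} {N m : ℕ} (hP : Monotone P) (h0 : P 0 = 0)
    (hconc : ∀ k, P k + P (k + 2) ≤ 2 * P (k + 1)) (hN : ∀ k, m ≤ k → P k = N) :
    IsPartition (fun k => P k - P (k - 1)) N where
  mono := by
    intro j k hj hjk
    induction k, hjk using Nat.le_induction with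
    | base => exact le_rfl
    | succ k hk ih =>
      obtain ⟨i, rfl⟩ : ∃ i, k = i + 1 := ⟨k - 1, by omega⟩
      have := hconc i
      have := hP (Nat.le_add_right i 1)
      have := hP (Nat.le_add_right (i + 1) 1)
      simp only [Nat.add_sub_cancel] at ih
      show P (i + 2) - P (i + 1) ≤ P j - P (j - 1)
      omega
  fin := ⟨m, fun j hj => by simp only [hN j (by omega), hN (j - 1) (by omega), Nat.sub_self]⟩
  total := by
    intro M hM
    rw [← S_eq_of_forall_lt_eq_zero hM (le_max_left M m), S_sub_pred hP h0,
      hN _ (le_max_right M m)]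

def roundEven (m : ℕ) : ℕ := m + m % 2

lemma even_roundEven (m : ℕ) : Even (roundEven m) := by
  rw [Nat.even_iff, roundEven]; omega

def spSum (f : ℕ → ℕ) (k : ℕ) : ℕ :=
  if Even k then roundEven (S f k)
  else max (S f k) ((roundEven (S f (k - 1)) + roundEven (S f (k + 1))) / 2)

def sp (f : ℕ → ℕ) : ℕ → ℕ := fun k => spSum f k - spSum f (k - 1)

lemma spSum_two_mul (f : ℕ → ℕ) (j : ℕ) : spSum f (2 * j) = roundEven (S f (2 * j)) :=
  if_pos (even_two_mul j)

lemma spSum_two_mul_add_one (f : ℕ → ℕ) (j : ℕ) :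
    spSum f (2 * j + 1) =
      max (S f (2 * j + 1)) ((roundEven (S f (2 * j)) + roundEven (S f (2 * j + 2))) / 2) :=
  if_neg (Nat.not_even_two_mul_add_one j)

section sp

variable {f : ℕ → ℕ} {N : ℕ}

lemma le_spSum (k : ℕ) : S f k ≤ spSum f k := by
  obtain ⟨j, rfl | rfl⟩ := Nat.even_or_odd' k
  · rw [spSum_two_mul, roundEven]; omega
  · rw [spSum_two_mul_add_one]; omega

lemma spSum_mono : Monotone (spSum f) := by
  refine monotone_nat_of_le_succ fun k => ?_
  have hS := S_mono f
  obtain ⟨j, rfl | rfl⟩ := Nat.even_or_odd' k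
  · have := hS (show 2 * j ≤ 2 * j + 2 by omega)
    rw [spSum_two_mul, spSum_two_mul_add_one]
    simp only [roundEven]
    omega
  · have := hS (show 2 * j ≤ 2 * j + 2 by omega)
    have := hS (show 2 * j + 1 ≤ 2 * j + 2 by omega)
    rw [spSum_two_mul_add_one, show 2 * j + 1 + 1 = 2 * (j + 1) by ring, spSum_two_mul,
      show 2 * (j + 1) = 2 * j + 2 by ring]
    simp only [roundEven]
    omega

lemma spSum_concave (hf : IsPartition f N) (k : ℕ) :
    spSum f k + spSum f (k + 2) ≤ 2 * spSum f (k + 1) := by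
  obtain ⟨j, rfl | rfl⟩ := Nat.even_or_odd' k
  · rw [spSum_two_mul, show 2 * j + 2 = 2 * (j + 1) by ring, spSum_two_mul,
      spSum_two_mul_add_one, show 2 * (j + 1) = 2 * j + 2 by ring]
    simp only [roundEven]
    omega
  · have e1 : S f (2 * j + 1) = S f (2 * j) + f (2 * j + 1) := S_succ f (2 * j)
    have e2 : S f (2 * j + 2) = S f (2 * j + 1) + f (2 * j + 2) := S_succ f (2 * j + 1)
    have e3 : S f (2 * j + 3) = S f (2 * j + 2) + f (2 * j + 3) := S_succ f (2 * j + 2)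
    have e4 : S f (2 * j + 4) = S f (2 * j + 3) + f (2 * j + 4) := S_succ f (2 * j + 3)
    have m1 := hf.mono (j := 2 * j + 1) (k := 2 * j + 2) (by omega) (by omega)
    have m2 := hf.mono (j := 2 * j + 2) (k := 2 * j + 3) (by omega) (by omega)
    have m3 := hf.mono (j := 2 * j + 3) (k := 2 * j + 4) (by omega) (by omega)
    rw [spSum_two_mul_add_one, show 2 * j + 1 + 2 = 2 * (j + 1) + 1 by ring,
      spSum_two_mul_add_one, show 2 * j + 1 + 1 = 2 * (j + 1) by ring, spSum_two_mul,
      show 2 * (j + 1) + 1 = 2 * j + 3 by ring, show 2 * (j + 1) + 2 = 2 * j + 4 by ring,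
      show 2 * (j + 1) = 2 * j + 2 by ring]
    simp only [roundEven]
    -- Rounding up at `2j` or `2j+4` only happens when the two adjacent parts have odd sum,
    -- hence differ, and that difference is the slack the rounding needs.
    omega

lemma spSum_zero : spSum f 0 = 0 := by
  simpa [roundEven, S] using spSum_two_mul f 0

lemma S_sp : S (sp f) = spSum f :=
  funext (S_sub_pred spSum_mono spSum_zero)

lemma sp_succ (k : ℕ) : sp f (k + 1) = spSum f (k + 1) - spSum f k := by
  simp only [sp, Nat.add_sub_cancel]

lemma spSum_eventually (hf : IsPartition f (2 * N)) : ∃ m, ∀ k, m ≤ k → spSum f k = 2 * N := by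
  obtain ⟨m, hm⟩ := hf.S_eventually
  refine ⟨m + 1, fun k hk => ?_⟩
  obtain ⟨j, rfl | rfl⟩ := Nat.even_or_odd' k
  · rw [spSum_two_mul, hm _ (by omega), roundEven]; omega
  · rw [spSum_two_mul_add_one, hm _ (by omega), hm (2 * j) (by omega), hm (2 * j + 2) (by omega),
      roundEven]
    omega

lemma isPartition_sp (hf : IsPartition f (2 * N)) : IsPartition (sp f) (2 * N) :=
  have ⟨_, hm⟩ := spSum_eventually hf
  isPartition_sub_pred spSum_mono spSum_zero (spSum_concave hf) hm

lemma specialPairs_sp : SpecialPairs (sp f) :=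
  specialPairs_iff_forall_even_S.2 fun j => by rw [S_sp, spSum_two_mul]; exact even_roundEven _

lemma dom_sp : Dom f (sp f) := fun k => by
  rw [S_sp]; exact le_spSum k

/-- An odd `spSum f (2j+1)` is the midpoint of its neighbours, or it is an odd `S λ (2j+1)`, which
by symplecticity lies inside a run `λ_{2j+1} = λ_{2j+2}` and is then again that midpoint. -/
lemma even_spSum_or_sp_eq (hf : IsPartition f N) (hs : Symp f) (j : ℕ) :
    Even (spSum f (2 * j + 1)) ∨ sp f (2 * j + 1) = sp f (2 * j + 2) := by
  have e1 : S f (2 * j + 1) = S f (2 * j) + f (2 * j + 1) := S_succ f (2 * j)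
  have e2 : S f (2 * j + 2) = S f (2 * j + 1) + f (2 * j + 2) := S_succ f (2 * j + 1)
  have hpar : Even (S f (2 * j + 1)) ∨ f (2 * j + 1) = f (2 * j + 2) ∧ Odd (f (2 * j + 1)) :=
    hs.even_S_or_eq_succ hf (2 * j + 1)
  rw [sp_succ, sp_succ (2 * j + 1), show 2 * j + 1 + 1 = 2 * (j + 1) by ring, spSum_two_mul,
    spSum_two_mul, show 2 * (j + 1) = 2 * j + 2 by ring, spSum_two_mul_add_one]
  simp only [Nat.even_iff, Nat.odd_iff, roundEven] at hpar ⊢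
  omega

lemma symp_sp (hf : IsPartition f (2 * N)) (hs : Symp f) : Symp (sp f) := by
  refine symp_of_forall_even_S_or_eq_succ (isPartition_sp hf) fun k => ?_
  rw [S_sp]
  obtain ⟨j, rfl | rfl⟩ := Nat.even_or_odd' k
  · exact Or.inl (by rw [spSum_two_mul]; exact even_roundEven _)
  · exact even_spSum_or_sp_eq hf hs j

lemma spSum_le_S {g : ℕ → ℕ} (hg : IsPartition g N) (hsp : SpecialPairs g) (hdom : Dom f g)
    (k : ℕ) : spSum f k ≤ S g k := by
  have heven := specialPairs_iff_forall_even_S.1 hsp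
  have hle : ∀ j, roundEven (S f (2 * j)) ≤ S g (2 * j) := fun j => by
    have := hdom (2 * j)
    have := Nat.even_iff.1 (heven j)
    rw [roundEven]; omega
  obtain ⟨j, rfl | rfl⟩ := Nat.even_or_odd' k
  · rw [spSum_two_mul]; exact hle j
  · have h0 := hle j
    have h2 : roundEven (S f (2 * j + 2)) ≤ S g (2 * j + 2) := hle (j + 1)
    have hconc := hg.S_add_S_le (2 * j)
    have h1 := hdom (2 * j + 1)
    rw [spSum_two_mul_add_one]
    omega

lemma sp_dom_of_specialPairs {g : ℕ → ℕ} (hg : IsPartition g N) (hsp : SpecialPairs g)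
    (hdom : Dom f g) : Dom (sp f) g := fun k => by
  rw [S_sp]; exact spSum_le_S hg hsp hdom k

end sp

/-- For a symplectic partition `λ` of `2n`, the set of special symplectic
partitions dominating `λ` is nonempty and has a least element (`sp(λ)`). -/
theorem stmt15 (n : ℕ) (f : ℕ → ℕ) (hpart : IsPartition f (2*n)) (hsymp : Symp f) :
    (∃ g, IsPartition g (2*n) ∧ Symp g ∧ SpecialPairs g ∧ Dom f g) ∧
    ∃ g, (IsPartition g (2*n) ∧ Symp g ∧ SpecialPairs g ∧ Dom f g) ∧
      ∀ g', IsPartition g' (2*n) → Symp g' → SpecialPairs g' → Dom f g' → Dom g g' := by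
  have hsp : IsPartition (sp f) (2*n) ∧ Symp (sp f) ∧ SpecialPairs (sp f) ∧ Dom f (sp f) :=
    ⟨isPartition_sp hpart, symp_sp hpart hsymp, specialPairs_sp, dom_sp⟩
  exact ⟨⟨sp f, hsp⟩, sp f, hsp, fun _ hg _ hgsp hdom => sp_dom_of_specialPairs hg hgsp hdom⟩

end Wald
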